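/- The max-relative entropy satisfies the data-processing inequality: for any positive trace-preserving linear map N and any density operators ω, τ with supp(ω) ⊆ supp(τ), D_max(N(ω)‖N(τ)) ≤ D_max(ω‖τ). -/

import Mathlib

/-!
A positive linear map is monotone for the Loewner order and commutes with real scalars, so every
`λ` with `ω ≤ 2^λ τ` also satisfies `N ω ≤ 2^λ N τ`; comparing the two infima then only needs the
first set to be nonempty and the second to be bounded below.

Nonemptiness is where `supp ω ⊆ supp τ` enters: if `P` is the projection onto the range of `τ`,
then `ω = P ω P ≤ r P ≤ r c τ`, where `r` bounds the spectrum of `ω` and `1 / c` is the smallest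
nonzero eigenvalue of `τ`. Boundedness comes from taking traces: `ω ≤ 2^λ τ` between operators of
trace one forces `1 ≤ 2^λ`, i.e. `0 ≤ λ`.
-/

open Matrix
open scoped ComplexOrder

/-- The max-relative entropy `D_max(ω‖τ) := inf {λ : ℝ | ω ≤ 2^λ τ}`, where `ω ≤ 2^λ τ` means
that `2^λ τ − ω` is positive semidefinite. -/
noncomputable def Dmax {n : Type*} [Fintype n] (ω τ : Matrix n n ℂ) : ℝ :=
  sInf {l : ℝ | (((2 : ℝ) ^ l : ℂ) • τ - ω).PosSemidef}

open scoped MatrixOrder NNReal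

-- On `ℂ`, a real power `z ^ (l : ℝ)` is `CFC.rpow`, the power given by the continuous functional
-- calculus; this is the power occurring in `Dmax`.
lemma Complex.ofReal_cfcRpow {x : ℝ} (hx : 0 ≤ x) (l : ℝ) : (x : ℂ) ^ l = ((x ^ l : ℝ) : ℂ) := by
  lift x to ℝ≥0 using hx
  have h : ((x : ℝ) : ℂ) = algebraMap ℝ≥0 ℂ x := rfl
  rw [h, CFC.rpow_algebraMap]
  rfl

lemma Dmax_eq_sInf {n : Type*} [Fintype n] (ω τ : Matrix n n ℂ) :
    Dmax ω τ = sInf {l : ℝ | ω ≤ (2 : ℝ) ^ l • τ} := by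
  simp only [Dmax, Complex.ofReal_cfcRpow zero_le_two, Matrix.le_iff, Complex.coe_smul]

namespace Matrix

lemma mul_eq_zero_of_mulVec_eq_zero {m k l n R : Type*} [Fintype n] [Fintype l] [Semiring R]
    {A : Matrix m n R} {B : Matrix k n R} {C : Matrix n l R}
    (h : ∀ v, A *ᵥ v = 0 → B *ᵥ v = 0) (hAC : A * C = 0) : B * C = 0 := by
  refine ext_iff_mulVec.2 fun v => ?_
  rw [← mulVec_mulVec, h _ (by rw [mulVec_mulVec, hAC, zero_mulVec]), zero_mulVec]

lemma one_le_of_le_smul {n : Type*} [Fintype n] {ω τ : Matrix n n ℂ} (hω : ω.trace = 1)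
    (hτ : τ.trace = 1) {c : ℝ} (h : ω ≤ c • τ) : 1 ≤ c := by
  have := (le_iff.1 h).trace_nonneg
  rw [trace_sub, trace_smul, hω, hτ, ← Complex.coe_smul, smul_eq_mul, mul_one] at this
  exact_mod_cast sub_nonneg.1 this

lemma monotone_of_map_posSemidef {n m : Type*} [Fintype n] [Fintype m]
    {N : Matrix n n ℂ →ₗ[ℂ] Matrix m m ℂ} (hN : ∀ A, A.PosSemidef → (N A).PosSemidef) :
    Monotone N := fun A B h => by
  rw [le_iff, ← map_sub]
  exact hN _ h

variable {n : Type*} [Fintype n] [DecidableEq n]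

lemma IsHermitian.exists_le_smul_one {A : Matrix n n ℂ} (hA : A.IsHermitian) :
    ∃ r : ℝ, 0 < r ∧ A ≤ r • (1 : Matrix n n ℂ) := by
  obtain ⟨r, hr⟩ := (finite_real_spectrum (A := A)).bddAbove
  refine ⟨max r 1, by positivity, ?_⟩
  rw [← Algebra.algebraMap_eq_smul_one]
  exact le_algebraMap_of_spectrum_le (fun x hx => (hr hx).trans (le_max_left r 1)) hA.isSelfAdjoint

/-- The projection onto the range of `τ`: as `0⁻¹ = 0`, `x * x⁻¹` is the indicator of `x ≠ 0`. -/
noncomputable def supportProj (τ : Matrix n n ℂ) : Matrix n n ℂ :=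
  cfc (fun x : ℝ => x * x⁻¹) τ

lemma isSelfAdjoint_supportProj (τ : Matrix n n ℂ) : IsSelfAdjoint (supportProj τ) :=
  cfc_predicate _ τ

lemma supportProj_mul_self (τ : Matrix n n ℂ) : supportProj τ * supportProj τ = supportProj τ := by
  rw [supportProj, ← cfc_mul _ _ τ (finite_real_spectrum.continuousOn _)
    (finite_real_spectrum.continuousOn _)]
  congr 1
  funext x
  by_cases hx : x = 0 <;> simp [hx]

lemma IsHermitian.mul_supportProj {τ : Matrix n n ℂ} (hτ : τ.IsHermitian) :
    τ * supportProj τ = τ := by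
  have hτ' := hτ.isSelfAdjoint
  calc τ * supportProj τ = cfc (fun x : ℝ => x * (x * x⁻¹)) τ := by
        rw [cfc_mul (fun x => x) _ τ (by fun_prop) (finite_real_spectrum.continuousOn _),
          cfc_id' ℝ τ]
        rfl
    _ = τ := by simp only [← mul_assoc, mul_self_mul_inv, cfc_id' ℝ τ]

lemma PosSemidef.exists_supportProj_le_smul {τ : Matrix n n ℂ} (hτ : τ.PosSemidef) :
    ∃ c : ℝ, 0 < c ∧ supportProj τ ≤ c • τ := by
  obtain ⟨c, hc⟩ := ((finite_real_spectrum (A := τ)).image (·⁻¹)).bddAbove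
  refine ⟨max c 1, by positivity, ?_⟩
  have hτ' := hτ.1.isSelfAdjoint
  rw [supportProj, ← cfc_const_mul_id (max c 1) τ]
  refine cfc_mono (fun x hx => ?_) (finite_real_spectrum.continuousOn _)
  obtain rfl | hx0 := (spectrum_nonneg_of_nonneg (nonneg_iff_posSemidef.2 hτ) hx).eq_or_lt
  · simp
  · have hinv : x⁻¹ ≤ max c 1 := (hc ⟨x, hx, rfl⟩).trans (le_max_left c 1)
    rw [mul_inv_cancel₀ hx0.ne']
    calc (1 : ℝ) = x⁻¹ * x := (inv_mul_cancel₀ hx0.ne').symm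
      _ ≤ max c 1 * x := by gcongr

lemma IsHermitian.supportProj_mul_mul_supportProj {ω τ : Matrix n n ℂ} (hω : ω.IsHermitian)
    (hτ : τ.IsHermitian) (hsupp : ∀ v, τ *ᵥ v = 0 → ω *ᵥ v = 0) :
    supportProj τ * ω * supportProj τ = ω := by
  have hωP : ω * supportProj τ = ω := by
    have := mul_eq_zero_of_mulVec_eq_zero hsupp (C := 1 - supportProj τ)
      (by rw [mul_sub, mul_one, hτ.mul_supportProj, sub_self])
    rwa [mul_sub, mul_one, sub_eq_zero, eq_comm] at this
  have hPω : supportProj τ * ω = ω := by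
    simpa only [star_mul, hω.star_eq, (isSelfAdjoint_supportProj τ).star_eq] using
      congrArg star hωP
  rw [hPω, hωP]

lemma IsHermitian.exists_le_smul_of_ker_le {ω τ : Matrix n n ℂ} (hω : ω.IsHermitian)
    (hτ : τ.PosSemidef) (hsupp : ∀ v, τ *ᵥ v = 0 → ω *ᵥ v = 0) :
    ∃ c : ℝ, 0 < c ∧ ω ≤ c • τ := by
  obtain ⟨r, hr, hωr⟩ := hω.exists_le_smul_one
  obtain ⟨c, hc, hPc⟩ := hτ.exists_supportProj_le_smul
  refine ⟨r * c, mul_pos hr hc, ?_⟩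
  calc ω = supportProj τ * ω * supportProj τ :=
        (hω.supportProj_mul_mul_supportProj hτ.1 hsupp).symm
    _ ≤ supportProj τ * (r • 1) * supportProj τ :=
        (isSelfAdjoint_supportProj τ).conjugate_le_conjugate hωr
    _ = r • supportProj τ := by
        rw [mul_smul_comm, mul_one, smul_mul_assoc, supportProj_mul_self]
    _ ≤ r • (c • τ) := smul_le_smul_of_nonneg_left hPc hr.le
    _ = (r * c) • τ := smul_smul r c τ

end Matrix

/-- The max-relative entropy satisfies the data-processing inequality: for any positive
trace-preserving linear map `N` and density operators `ω, τ` with `supp ω ⊆ supp τ`,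
`D_max(N(ω)‖N(τ)) ≤ D_max(ω‖τ)`. -/
theorem Dmax_data_processing
    {n m : Type*} [Fintype n] [Fintype m]
    (N : Matrix n n ℂ →ₗ[ℂ] Matrix m m ℂ)
    (hNpos : ∀ A : Matrix n n ℂ, A.PosSemidef → (N A).PosSemidef)
    (hNtr : ∀ A : Matrix n n ℂ, (N A).trace = A.trace)
    (ω τ : Matrix n n ℂ)
    (hω : ω.PosSemidef) (hωtr : ω.trace = 1)
    (hτ : τ.PosSemidef) (hτtr : τ.trace = 1)
    (hsupp : ∀ v : n → ℂ, τ *ᵥ v = 0 → ω *ᵥ v = 0) :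
    Dmax (N ω) (N τ) ≤ Dmax ω τ := by
  classical
  obtain ⟨c, hc, hωc⟩ := hω.1.exists_le_smul_of_ker_le hτ hsupp
  rw [Dmax_eq_sInf, Dmax_eq_sInf]
  refine csInf_le_csInf ⟨0, fun l hl => ?_⟩ ⟨Real.logb 2 c, ?_⟩ fun l hl => ?_
  · have h2l := one_le_of_le_smul ((hNtr ω).trans hωtr) ((hNtr τ).trans hτtr) hl
    rwa [← Real.rpow_zero 2, Real.rpow_le_rpow_left_iff one_lt_two] at h2l
  · rwa [Set.mem_ofPred_eq, Real.rpow_logb two_pos (by norm_num) hc]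
  · simpa only [Set.mem_ofPred_eq, LinearMap.map_smul_of_tower] using
      monotone_of_map_posSemidef hNpos hl
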